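/- Let β: [l] → [k] be a morphism in the augmented simplex category Δ_a and let −1 ≤ i ≤ k. Then there is a unique integer −1 ≤ j ≤ l and a unique pair of morphisms β₁: [j] → [i] and β₂: [l−j−1] → [k−i−1] in Δ_a such that σ_a(β₁, β₂) = β. Moreover, j equals max{ j' ∈ [l] : β(j') ≤ i } if this set is nonempty, and j = −1 otherwise; the maps are given by β₁(r) = β(r) and β₂(r) = β(j+1+r) − i − 1. -/

import Mathlib

/-!
In a factorisation `β = σₐ(β₁, β₂)` with `β₁` landing in `[i]`, the points of `[l]` sent into
`[i]` are exactly those of the first block, so the length `j + 1` of that block is forced to be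
the number of points `r` with `β r ≤ i`; by monotonicity these form an initial segment of `[l]`,
ending at the maximum of `{r | β r ≤ i}`. Once the blocks are fixed, `β₁` and `β₂` are read off
from `β` on them, which gives uniqueness; conversely these two maps do factor `β`.
-/

open CategoryTheory CategoryTheory.Limits Simplicial Opposite

universe v u

namespace OrdSum

/-- The "ordinal sum" of two monotone maps between finite linear orders. -/
def ordJoin {m n m' n' : ℕ} (f : Fin m →o Fin m') (g : Fin n →o Fin n') :
    Fin (m + n) →o Fin (m' + n') where
  toFun i :=
    if h : (i : ℕ) < m then Fin.castAdd n' (f ⟨i, h⟩)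
    else Fin.natAdd m' (g ⟨(i : ℕ) - m, by omega⟩)
  monotone' := by
    intro i j hij
    have hij' : (i : ℕ) ≤ (j : ℕ) := hij
    dsimp only
    by_cases hi : (i : ℕ) < m <;> by_cases hj : (j : ℕ) < m
    · simp only [dif_pos hi, dif_pos hj, Fin.le_def, Fin.coe_castAdd]
      exact f.monotone (show (⟨(i:ℕ), hi⟩ : Fin m) ≤ ⟨(j:ℕ), hj⟩ from hij')
    · simp only [dif_pos hi, dif_neg hj, Fin.le_def, Fin.coe_castAdd, Fin.coe_natAdd]
      have := (f ⟨(i:ℕ), hi⟩).isLt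
      omega
    · omega
    · simp only [dif_neg hi, dif_neg hj, Fin.le_def, Fin.coe_natAdd]
      have : (⟨(i:ℕ) - m, by omega⟩ : Fin n) ≤ ⟨(j:ℕ) - m, by omega⟩ := by
        simp only [Fin.mk_le_mk]; omega
      have := g.monotone this
      omega

theorem ordJoin_id (m n : ℕ) :
    ordJoin (OrderHom.id (α := Fin m)) (OrderHom.id (α := Fin n)) = OrderHom.id := by
  ext i
  simp only [ordJoin, OrderHom.coe_mk, OrderHom.id_coe, id_eq]
  by_cases h : (i : ℕ) < m
  · simp [dif_pos h]
  · simp only [dif_neg h, Fin.coe_natAdd]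
    omega

theorem ordJoin_comp {m n m' n' m'' n'' : ℕ}
    (f : Fin m →o Fin m') (g : Fin n →o Fin n')
    (f' : Fin m' →o Fin m'') (g' : Fin n' →o Fin n'') :
    ordJoin (f'.comp f) (g'.comp g) = (ordJoin f' g').comp (ordJoin f g) := by
  ext i
  simp only [OrderHom.comp_coe, Function.comp_apply]
  have key : ∀ {a b a' b' : ℕ} (F : Fin a →o Fin a') (G : Fin b →o Fin b') (x : Fin (a + b)),
      ordJoin F G x = if h : (x : ℕ) < a then Fin.castAdd b' (F ⟨x, h⟩)
        else Fin.natAdd a' (G ⟨(x : ℕ) - a, by omega⟩) := fun _ _ _ => rfl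
  rw [key, key, key]
  by_cases h : (i : ℕ) < m
  · have h1 : ((Fin.castAdd n' (f ⟨(i:ℕ), h⟩)) : ℕ) < m' := (f ⟨(i:ℕ), h⟩).isLt
    simp only [dif_pos h, dif_pos h1]
    congr 1
  · have h1 : ¬ ((Fin.natAdd m' (g ⟨(i:ℕ) - m, by omega⟩)) : ℕ) < m' := by
      simp only [Fin.coe_natAdd]; omega
    simp only [dif_neg h]
    rw [dif_neg h1]
    simp only [OrderHom.comp_coe, Function.comp_apply, Fin.coe_natAdd, Nat.add_right_cancel_iff]
    congr 2
    apply Fin.ext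
    simp

/-- The ordinal sum functor `σ : Δ × Δ → Δ`, `([k],[l]) ↦ [k+1+l]`. -/
def ordSum : SimplexCategory × SimplexCategory ⥤ SimplexCategory where
  obj x := SimplexCategory.mk (x.1.len + 1 + x.2.len)
  map {x y} f := SimplexCategory.Hom.mk
    (ordJoin (m := x.1.len + 1) (n := x.2.len + 1) (m' := y.1.len + 1) (n' := y.2.len + 1)
      f.1.toOrderHom f.2.toOrderHom)
  map_id x := by
    apply SimplexCategory.Hom.ext
    simp only [SimplexCategory.Hom.toOrderHom_mk]
    exact ordJoin_id _ _
  map_comp {x y z} f g := by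
    apply SimplexCategory.Hom.ext
    simp only [SimplexCategory.Hom.toOrderHom_mk]
    exact ordJoin_comp _ _ _ _

/-- The augmented simplex category `Δₐ`: the object `⟨n⟩` is the linear order with `n`
elements (so `⟨0⟩` is `[-1] = ∅` and `⟨n+1⟩` is `[n]`); morphisms are monotone maps. -/
@[ext] structure AugSimplex where
  len : ℕ

instance : Category.{0} AugSimplex where
  Hom a b := Fin a.len →o Fin b.len
  id _ := OrderHom.id
  comp f g := g.comp f

/-- The inclusion `ι : Δ → Δₐ`. -/
def incl : SimplexCategory ⥤ AugSimplex where
  obj x := ⟨x.len + 1⟩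
  map f := f.toOrderHom
  map_id _ := rfl
  map_comp _ _ := rfl

/-- The ordinal sum functor `σₐ : Δₐ × Δₐ → Δₐ`. -/
def ordSumAug : AugSimplex × AugSimplex ⥤ AugSimplex where
  obj x := ⟨x.1.len + x.2.len⟩
  map f := ordJoin f.1 f.2
  map_id _ := ordJoin_id _ _
  map_comp _ _ := ordJoin_comp _ _ _ _

variable {C : Type u} [Category.{v} C]

variable (C) in
/-- Total décalage `σ* : Fun(Δᵒᵖ, C) ⥤ Fun((Δ×Δ)ᵒᵖ, C)`, precomposition with ordinal sum. -/
def decF : (SimplexCategoryᵒᵖ ⥤ C) ⥤ ((SimplexCategory × SimplexCategory)ᵒᵖ ⥤ C) :=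
  (Functor.whiskeringLeft _ _ C).obj ordSum.op

variable (C) in
/-- The functor sending a bisimplicial object `Y` to `[k] ↦ Y_{k,−}`. -/
def rowsF : ((SimplexCategory × SimplexCategory)ᵒᵖ ⥤ C) ⥤
    (SimplexCategoryᵒᵖ ⥤ (SimplexCategoryᵒᵖ ⥤ C)) :=
  (Functor.whiskeringLeft _ _ C).obj
    (prodOpEquiv (C := SimplexCategory) (D := SimplexCategory)).inverse ⋙ Functor.curry

variable (C) in
/-- The functor sending a bisimplicial object `Y` to `[k] ↦ Y_{−,k}`. -/
def colsF : ((SimplexCategory × SimplexCategory)ᵒᵖ ⥤ C) ⥤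
    (SimplexCategoryᵒᵖ ⥤ (SimplexCategoryᵒᵖ ⥤ C)) :=
  (Functor.whiskeringLeft _ _ C).obj
    (CategoryTheory.Prod.swap SimplexCategoryᵒᵖ SimplexCategoryᵒᵖ ⋙
      (prodOpEquiv (C := SimplexCategory) (D := SimplexCategory)).inverse) ⋙ Functor.curry

/-- The simplicial object `Y_{k,−}`. -/
def rowS (Y : (SimplexCategory × SimplexCategory)ᵒᵖ ⥤ C) (k : SimplexCategory) :
    SimplexCategoryᵒᵖ ⥤ C :=
  ((rowsF C).obj Y).obj (op k)

/-- The simplicial object `Y_{−,k}`. -/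
def colS (Y : (SimplexCategory × SimplexCategory)ᵒᵖ ⥤ C) (k : SimplexCategory) :
    SimplexCategoryᵒᵖ ⥤ C :=
  ((colsF C).obj Y).obj (op k)

/-- `π₀` of a simplicial object: the coequalizer of the two face maps `X₁ ⇉ X₀`. -/
noncomputable def pi0F [HasCoequalizers C] : (SimplexCategoryᵒᵖ ⥤ C) ⥤ C where
  obj X := coequalizer (X.map (SimplexCategory.δ (1 : Fin 2)).op)
    (X.map (SimplexCategory.δ (0 : Fin 2)).op)
  map {X Y} f := coequalizer.desc (f.app (op ⦋0⦌) ≫ coequalizer.π _ _) (by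
    rw [← Category.assoc, ← Category.assoc, f.naturality, f.naturality,
      Category.assoc, Category.assoc, coequalizer.condition])
  map_id X := by
    apply coequalizer.hom_ext
    simp
  map_comp f g := by
    apply coequalizer.hom_ext
    simp

/-- The canonical quotient map `X₀ → π₀(X)`. -/
noncomputable def pi0π [HasCoequalizers C] (X : SimplexCategoryᵒᵖ ⥤ C) :
    X.obj (op ⦋0⦌) ⟶ pi0F.obj X :=
  coequalizer.π _ _

variable (C) in
/-- `Y ↦ ([k] ↦ π₀(Y_{k,−}))`. -/
noncomputable def rowsPi0F [HasCoequalizers C] :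
    ((SimplexCategory × SimplexCategory)ᵒᵖ ⥤ C) ⥤ (SimplexCategoryᵒᵖ ⥤ C) :=
  rowsF C ⋙ (Functor.whiskeringRight _ _ _).obj pi0F

variable (C) in
/-- `Y ↦ ([k] ↦ π₀(Y_{−,k}))`. -/
noncomputable def colsPi0F [HasCoequalizers C] :
    ((SimplexCategory × SimplexCategory)ᵒᵖ ⥤ C) ⥤ (SimplexCategoryᵒᵖ ⥤ C) :=
  colsF C ⋙ (Functor.whiskeringRight _ _ _).obj pi0F

variable (C) in
/-- The levelwise tensor `X ⊗ K` of a simplicial object with a simplicial set,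
`(X ⊗ K)ₖ = ∐_{Kₖ} Xₖ`, as a functor in `X`. -/
noncomputable def tensorF [HasColimits C] (K : SSet.{v}) :
    (SimplexCategoryᵒᵖ ⥤ C) ⥤ (SimplexCategoryᵒᵖ ⥤ C) where
  obj X :=
    { obj := fun n => ∐ (fun (_ : K.obj n) => X.obj n)
      map := fun {n m} f => Sigma.desc
        (fun s => X.map f ≫ Sigma.ι (fun (_ : K.obj m) => X.obj m) (K.map f s))
      map_id := fun n => by
        apply Sigma.hom_ext
        intro s
        simp [FunctorToTypes.map_id_apply]
      map_comp := fun {n m l} f g => by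
        apply Sigma.hom_ext
        intro s
        simp [FunctorToTypes.map_comp_apply] }
  map {X Y} f :=
    { app := fun n => Limits.Sigma.desc
        (fun (s : K.obj n) => f.app n ≫ Sigma.ι (fun (_ : K.obj n) => Y.obj n) s)
      naturality := fun {n m} g => by
        apply Sigma.hom_ext
        intro s
        simp }
  map_id X := by
    ext n : 2
    simp
  map_comp f g := by
    ext n : 2
    simp

variable (C) in
/-- The canonical projection `X ⊗ K ⟶ X`, induced by `K ⟶ Δ[0]`. -/
noncomputable def tensorProj [HasColimits C] (K : SSet.{v}) :
    tensorF C K ⟶ 𝟭 (SimplexCategoryᵒᵖ ⥤ C) where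
  app X :=
    { app := fun n => Sigma.desc (fun _ => 𝟙 (X.obj n))
      naturality := fun {n m} g => by
        apply Sigma.hom_ext
        intro s
        simp [tensorF] }
  naturality {X Y} f := by
    ext n : 2
    apply Sigma.hom_ext
    intro s
    simp [tensorF]



/-- The splitting index: `sigmaIdx β p` is the number of elements `j` of the source with
`β j < p`; equivalently `j_β + 1` where `j_β` is the largest index landing in the first block. -/
def sigmaIdx {m n : ℕ} (β : Fin m →o Fin n) (p : ℕ) : ℕ :=
  (Finset.univ.filter fun j : Fin m => ((β j) : ℕ) < p).card

theorem sigmaIdx_le {m n : ℕ} (β : Fin m →o Fin n) (p : ℕ) : sigmaIdx β p ≤ m := by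
  classical
  exact le_trans (Finset.card_filter_le _ _) (by simp)

theorem lt_sigmaIdx_iff {m n : ℕ} (β : Fin m →o Fin n) (p : ℕ) (j : Fin m) :
    (j : ℕ) < sigmaIdx β p ↔ ((β j) : ℕ) < p := by
  classical
  constructor
  · intro h
    by_contra hb
    push_neg at hb
    have hsub : (Finset.univ.filter fun j' : Fin m => ((β j') : ℕ) < p) ⊆ Finset.Iio j := by
      intro x hx
      simp only [Finset.mem_filter, Finset.mem_univ, true_and] at hx
      simp only [Finset.mem_Iio]
      by_contra hxj
      push_neg at hxj
      have hmono := β.monotone hxj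
      rw [Fin.le_def] at hmono
      omega
    have hc := Finset.card_le_card hsub
    rw [Fin.card_Iio] at hc
    exact absurd h (by unfold sigmaIdx; omega)
  · intro h
    have hsub : Finset.Iic j ⊆ (Finset.univ.filter fun j' : Fin m => ((β j') : ℕ) < p) := by
      intro x hx
      simp only [Finset.mem_Iic] at hx
      simp only [Finset.mem_filter, Finset.mem_univ, true_and]
      have hmono := β.monotone hx
      rw [Fin.le_def] at hmono
      omega
    have hc := Finset.card_le_card hsub
    rw [Fin.card_Iic] at hc
    unfold sigmaIdx
    omega

/-- The first component of the splitting of `β` at `p`. -/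
def splitFst {m n : ℕ} (β : Fin m →o Fin n) (p : ℕ) : Fin (sigmaIdx β p) →o Fin p where
  toFun r := ⟨((β ⟨r.val, lt_of_lt_of_le r.2 (sigmaIdx_le β p)⟩) : ℕ),
    (lt_sigmaIdx_iff β p _).mp r.2⟩
  monotone' := by
    intro a b hab
    have h := β.monotone (show (⟨a.val, lt_of_lt_of_le a.2 (sigmaIdx_le β p)⟩ : Fin m) ≤
      ⟨b.val, lt_of_lt_of_le b.2 (sigmaIdx_le β p)⟩ from hab)
    exact h

/-- The second component of the splitting of `β` at `p`. -/
def splitSnd {m n : ℕ} (β : Fin m →o Fin n) (p : ℕ) (hp : p ≤ n) :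
    Fin (m - sigmaIdx β p) →o Fin (n - p) where
  toFun r := ⟨((β ⟨sigmaIdx β p + r.val, by have := r.2; omega⟩) : ℕ) - p, by
    have h1 := (β ⟨sigmaIdx β p + r.val, by have := r.2; omega⟩).2
    have h2 : ¬ ((sigmaIdx β p + r.val) < sigmaIdx β p) := by omega
    have h3 := (lt_sigmaIdx_iff β p ⟨sigmaIdx β p + r.val, by have := r.2; omega⟩).not.mp
      (by simpa using h2)
    simp only [not_lt] at h3
    omega⟩
  monotone' := by
    intro a b hab
    have hav : a.val ≤ b.val := hab
    dsimp only
    simp only [Fin.mk_le_mk]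
    apply Nat.sub_le_sub_right
    exact β.monotone (Fin.mk_le_mk.mpr (by omega))

section ordJoin

variable {m n m' n' : ℕ} (f : Fin m →o Fin m') (g : Fin n →o Fin n')

theorem ordJoin_apply (i : Fin (m + n)) :
    ordJoin f g i = if h : (i : ℕ) < m then Fin.castAdd n' (f ⟨i, h⟩)
      else Fin.natAdd m' (g ⟨(i : ℕ) - m, by omega⟩) :=
  rfl

theorem ordJoin_val_of_lt (i : Fin (m + n)) (hi : (i : ℕ) < m) :
    (ordJoin f g i : ℕ) = f ⟨i, hi⟩ := by
  rw [ordJoin_apply, dif_pos hi, Fin.val_castAdd]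

theorem ordJoin_val_of_le (i : Fin (m + n)) (hi : m ≤ (i : ℕ)) :
    (ordJoin f g i : ℕ) = m' + g ⟨i - m, by omega⟩ := by
  rw [ordJoin_apply, dif_neg (not_lt.mpr hi), Fin.val_natAdd]

end ordJoin

section factorization

variable {m n p q n' : ℕ} {β : Fin m → Fin n} {f : Fin q →o Fin p}
  {g : Fin (m - q) →o Fin n'}

theorem lt_iff_of_ordJoin_val_eq (hq : q ≤ m)
    (hfg : ∀ r : Fin m, (ordJoin f g ⟨r, by omega⟩ : ℕ) = β r) (r : Fin m) :
    (r : ℕ) < q ↔ (β r : ℕ) < p := by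
  rw [← hfg r]
  by_cases h : (r : ℕ) < q
  · simp only [ordJoin_val_of_lt f g ⟨r, _⟩ h, h, (f _).isLt]
  · rw [ordJoin_val_of_le f g ⟨r, _⟩ (not_lt.mp h)]
    exact iff_of_false h (by omega)

theorem fst_val_of_ordJoin_val_eq (hq : q ≤ m)
    (hfg : ∀ r : Fin m, (ordJoin f g ⟨r, by omega⟩ : ℕ) = β r) (r : Fin q) :
    (f r : ℕ) = β ⟨r, by omega⟩ := by
  rw [← hfg, ordJoin_val_of_lt f g _ r.isLt]

theorem snd_val_of_ordJoin_val_eq (hq : q ≤ m)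
    (hfg : ∀ r : Fin m, (ordJoin f g ⟨r, by omega⟩ : ℕ) = β r) (r : Fin (m - q)) :
    p + (g r : ℕ) = β ⟨q + r, by omega⟩ := by
  rw [← hfg, ordJoin_val_of_le f g _ (by simp)]
  simp

end factorization

section sigmaIdx

variable {m n : ℕ} (β : Fin m →o Fin n) (p : ℕ)

theorem sigmaIdx_eq_of_lt_iff {q : ℕ} (hq : q ≤ m)
    (h : ∀ r : Fin m, (r : ℕ) < q ↔ (β r : ℕ) < p) : sigmaIdx β p = q := by
  have hle := sigmaIdx_le β p
  by_contra hne
  rcases Nat.lt_or_gt_of_ne hne with hlt | hlt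
  · exact lt_irrefl _ ((lt_sigmaIdx_iff β p ⟨sigmaIdx β p, by omega⟩).mpr ((h _).mp hlt))
  · exact lt_irrefl _ ((h ⟨q, by omega⟩).mpr ((lt_sigmaIdx_iff β p _).mp hlt))

theorem sigmaIdx_eq_of_ordJoin_val_eq {q n' : ℕ} {f : Fin q →o Fin p}
    {g : Fin (m - q) →o Fin n'} (hq : q ≤ m)
    (hfg : ∀ r : Fin m, (ordJoin f g ⟨r, by omega⟩ : ℕ) = β r) : sigmaIdx β p = q :=
  sigmaIdx_eq_of_lt_iff β p hq (lt_iff_of_ordJoin_val_eq hq hfg)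

theorem sigmaIdx_eq_dite :
    sigmaIdx β p = if h : (Finset.univ.filter fun j : Fin m => ((β j) : ℕ) < p).Nonempty
      then (((Finset.univ.filter fun j : Fin m => ((β j) : ℕ) < p).max' h : ℕ) + 1)
      else 0 := by
  split_ifs with h
  · set S := Finset.univ.filter fun j : Fin m => ((β j) : ℕ) < p
    have hmax : (β (S.max' h) : ℕ) < p := by simpa [S] using S.max'_mem h
    refine sigmaIdx_eq_of_lt_iff β p (S.max' h).isLt fun r => ⟨fun hr => ?_, fun hr => ?_⟩
    · exact lt_of_le_of_lt (β.monotone (Fin.le_def.mpr (Nat.lt_succ_iff.mp hr))) hmax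
    · exact Nat.lt_succ_of_le (S.le_max' r (by simpa [S] using hr))
  · refine sigmaIdx_eq_of_lt_iff β p (Nat.zero_le m) fun r =>
      ⟨fun hr => absurd hr r.val.not_lt_zero, fun hr => ?_⟩
    exact absurd ⟨r, by simpa using hr⟩ h

theorem ordJoin_splitFst_splitSnd_val (hp : p ≤ n) (r : Fin m) :
    (ordJoin (splitFst β p) (splitSnd β p hp) ⟨r, by have := sigmaIdx_le β p; omega⟩ : ℕ)
      = β r := by
  by_cases h : (r : ℕ) < sigmaIdx β p
  · rw [ordJoin_val_of_lt _ _ _ h]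
    rfl
  · rw [ordJoin_val_of_le _ _ _ (not_lt.mp h)]
    have hβr : p ≤ (β r : ℕ) := not_lt.mp ((lt_sigmaIdx_iff β p r).not.mp h)
    have hidx : (⟨sigmaIdx β p + (r - sigmaIdx β p), by omega⟩ : Fin m) = r :=
      Fin.ext (by simp only; omega)
    change p + ((β ⟨sigmaIdx β p + (r - sigmaIdx β p), _⟩ : ℕ) - p) = β r
    rw [hidx]
    omega

end sigmaIdx

/-- **Construction 2.9 (`betais`).**
Let `β : [l] → [k]` be a morphism in the augmented simplex category (encoded as a monotone map
`β : Fin m →o Fin n` between finite linear orders, with `m = l+1`, `n = k+1` elements) and let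
`−1 ≤ i ≤ k` (encoded as `p = i+1 ≤ n`).  Then there is a unique `−1 ≤ j ≤ l` (encoded as
`q = j+1`, the first component of `t`) and a unique pair of morphisms
`β₁ : [j] → [i]`, `β₂ : [l−j−1] → [k−i−1]` with `σₐ(β₁, β₂) = β`.  Moreover `j` is the
maximum of `{j' | β(j') ≤ i}` if this set is nonempty and `j = −1` otherwise (i.e. `q` is the
successor of the maximum of `{j' | β j' < p}` if that set is nonempty, and `0` otherwise),
`β₁` is given by `r ↦ β(r)`, and `β₂` by `r ↦ β(j+1+r) − i − 1`. -/
theorem exists_unique_ordinal_sum_factorization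
    (m n : ℕ) (β : Fin m →o Fin n) (p : ℕ) (hp : p ≤ n) :
    (∃! t : Σ q : Fin (m + 1), (Fin q.val →o Fin p) × (Fin (m - q.val) →o Fin (n - p)),
      ∀ r : Fin m,
        ((ordJoin t.2.1 t.2.2) ⟨r.val, by have := r.2; have := t.1.2; omega⟩ : ℕ) = (β r : ℕ)) ∧
    (∀ t : Σ q : Fin (m + 1), (Fin q.val →o Fin p) × (Fin (m - q.val) →o Fin (n - p)),
      (∀ r : Fin m,
        ((ordJoin t.2.1 t.2.2) ⟨r.val, by have := r.2; have := t.1.2; omega⟩ : ℕ) = (β r : ℕ)) →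
      ((t.1 : ℕ) = (if h : (Finset.univ.filter fun j : Fin m => ((β j) : ℕ) < p).Nonempty
          then (((Finset.univ.filter fun j : Fin m => ((β j) : ℕ) < p).max' h : ℕ) + 1)
          else 0)) ∧
      (∀ r : Fin (t.1 : ℕ),
        ((t.2.1 r) : ℕ) = (β ⟨r.val, by have := r.2; have := t.1.2; omega⟩ : ℕ)) ∧
      (∀ r : Fin (m - (t.1 : ℕ)),
        ((t.2.2 r) : ℕ) = (β ⟨(t.1 : ℕ) + r.val, by have := r.2; omega⟩ : ℕ) - p)) := by
  refine ⟨⟨⟨⟨sigmaIdx β p, Nat.lt_succ_of_le (sigmaIdx_le β p)⟩,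
    splitFst β p, splitSnd β p hp⟩, ordJoin_splitFst_splitSnd_val β p hp, ?_⟩, ?_⟩
  · rintro ⟨⟨q, hq⟩, f, g⟩ hfg
    dsimp only at hfg
    obtain rfl : sigmaIdx β p = q := sigmaIdx_eq_of_ordJoin_val_eq β p (Nat.le_of_lt_succ hq) hfg
    have hf : f = splitFst β p := by
      ext r
      exact fst_val_of_ordJoin_val_eq (sigmaIdx_le β p) hfg r
    have hg : g = splitSnd β p hp := by
      ext r
      have := snd_val_of_ordJoin_val_eq (sigmaIdx_le β p) hfg r
      change (g r : ℕ) = (β _ : ℕ) - p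
      omega
    rw [hf, hg]
  · intro t hfg
    refine ⟨(sigmaIdx_eq_of_ordJoin_val_eq β p t.1.is_le hfg).symm.trans (sigmaIdx_eq_dite β p),
      fst_val_of_ordJoin_val_eq t.1.is_le hfg, fun r => ?_⟩
    have := snd_val_of_ordJoin_val_eq t.1.is_le hfg r
    omega

end OrdSum
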